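/- In any solution to the peg puzzle, the number of steps (moves of type S, s, or their weight-decreasing counterparts) is at least 2N. More precisely, since the N² first crosses contribute weight exactly 2N² and the total weight change is 2N² + 2N, and all non-first-cross moves have average weight gain at most 1, the number of non-first-cross moves is at least 2N. -/
import Mathlib


open scoped Classical

/-- A peg of the puzzle: `Sum.inl i` is the `i`-th blue peg, `Sum.inr i` is
the `i`-th red peg. -/
abbrev Peg (N : ℕ) := Fin N ⊕ Fin N

/-- A solution of the `N`-peg puzzle using `L` moves, recorded by the
position (a hole, numbered `1,…,2N+1`) of each peg at each time `0,…,L`.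
Initially the blue pegs occupy holes `1,…,N` and the red pegs holes
`N+2,…,2N+1`; at the end the red pegs occupy the leftmost `N` holes and the
blue pegs the rightmost `N` holes.  On each move exactly one peg moves, by
`±1` into the adjacent empty hole (a step), or by `±2` over one adjacent peg
into the empty hole (a jump). -/
structure PegSolution (N L : ℕ) where
  pos : ℕ → Peg N → ℤ
  mem_range : ∀ t ≤ L, ∀ p, 1 ≤ pos t p ∧ pos t p ≤ 2 * N + 1
  inj : ∀ t ≤ L, ∀ p q, pos t p = pos t q → p = q
  init_blue : ∀ i : Fin N, pos 0 (Sum.inl i) = (i : ℤ) + 1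
  init_red : ∀ i : Fin N, pos 0 (Sum.inr i) = (N : ℤ) + 2 + (i : ℤ)
  final_blue : ∀ i : Fin N, (N : ℤ) + 2 ≤ pos L (Sum.inl i)
  final_red : ∀ i : Fin N, pos L (Sum.inr i) ≤ (N : ℤ)
  move : ∀ t < L, ∃ mover : Peg N,
    (∀ q, q ≠ mover → pos (t + 1) q = pos t q) ∧
    ((pos (t + 1) mover - pos t mover = 1 ∨ pos (t + 1) mover - pos t mover = -1) ∨
     ((pos (t + 1) mover - pos t mover = 2 ∨ pos (t + 1) mover - pos t mover = -2) ∧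
      ∃ mid : Peg N, mid ≠ mover ∧ 2 * pos t mid = pos t mover + pos (t + 1) mover))

/-- The pair consisting of the blue peg `i` and the red peg `j` crosses on
move `t` (one jumps over the other): their relative order changes between
times `t` and `t + 1`. -/
def CrossesAt {N L : ℕ} (s : PegSolution N L) (i j : Fin N) (t : ℕ) : Prop :=
  (s.pos t (Sum.inl i) - s.pos t (Sum.inr j)) *
    (s.pos (t + 1) (Sum.inl i) - s.pos (t + 1) (Sum.inr j)) < 0

/-- The weight of the position at time `t`: total distance moved right by the
blue pegs plus total distance moved left by the red pegs. -/
def weight {N L : ℕ} (s : PegSolution N L) (t : ℕ) : ℤ :=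
  (∑ i : Fin N, (s.pos t (Sum.inl i) - s.pos 0 (Sum.inl i))) +
  ∑ i : Fin N, (s.pos 0 (Sum.inr i) - s.pos t (Sum.inr i))

/-- Move `t` is a first cross: some red–blue pair crosses on move `t` for the
first time. -/
def IsFirstCross {N L : ℕ} (s : PegSolution N L) (t : ℕ) : Prop :=
  ∃ i j : Fin N, CrossesAt s i j t ∧ ∀ u < t, ¬ CrossesAt s i j u

namespace PegAux
open Finset

variable {N L : ℕ}

/-- color: blue = 1, red = -1 -/
def col {N : ℕ} : Peg N → ℤ := Sum.elim (fun _ => 1) (fun _ => -1)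

lemma col_cases (p : Peg N) : col p = 1 ∨ col p = -1 := by
  rcases p with i | i <;> simp [col]

lemma col_inl (i : Fin N) : col (Sum.inl i : Peg N) = 1 := rfl
lemma col_inr (i : Fin N) : col (Sum.inr i : Peg N) = -1 := rfl

lemma col_eq_one {p : Peg N} (h : col p = 1) : ∃ i, p = Sum.inl i := by
  rcases p with i | i
  · exact ⟨i, rfl⟩
  · simp [col] at h

lemma col_eq_negone {p : Peg N} (h : col p = -1) : ∃ i, p = Sum.inr i := by
  rcases p with i | i
  · simp [col] at h
  · exact ⟨i, rfl⟩

/-- the mover of move `t` -/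
noncomputable def mv (s : PegSolution N L) (hN : 0 < N) (t : ℕ) : Peg N :=
  if h : t < L then (s.move t h).choose else Sum.inl ⟨0, hN⟩

variable (s : PegSolution N L) (hN : 0 < N)
include hN

/-- displacement of the mover -/
noncomputable def dlt (t : ℕ) : ℤ := s.pos (t + 1) (mv s hN t) - s.pos t (mv s hN t)

lemma mv_eq {t : ℕ} (ht : t < L) : mv s hN t = (s.move t ht).choose := dif_pos ht

lemma mv_spec {t : ℕ} (ht : t < L) :
    (∀ q, q ≠ mv s hN t → s.pos (t + 1) q = s.pos t q) ∧
    ((dlt s hN t = 1 ∨ dlt s hN t = -1) ∨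
     ((dlt s hN t = 2 ∨ dlt s hN t = -2) ∧
      ∃ mid : Peg N, mid ≠ mv s hN t ∧
        2 * s.pos t mid = s.pos t (mv s hN t) + s.pos (t + 1) (mv s hN t))) := by
  unfold dlt
  rw [mv_eq s hN ht]
  exact (s.move t ht).choose_spec

lemma mv_fix {t : ℕ} (ht : t < L) {q : Peg N} (hq : q ≠ mv s hN t) :
    s.pos (t + 1) q = s.pos t q := (mv_spec s hN ht).1 q hq

lemma dlt_mem {t : ℕ} (ht : t < L) :
    dlt s hN t = 1 ∨ dlt s hN t = -1 ∨ dlt s hN t = 2 ∨ dlt s hN t = -2 := by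
  rcases (mv_spec s hN ht).2 with (h | h) | ⟨h, -⟩ <;> tauto

lemma exists_mid {t : ℕ} (ht : t < L) (hj : dlt s hN t = 2 ∨ dlt s hN t = -2) :
    ∃ m : Peg N, m ≠ mv s hN t ∧
      2 * s.pos t m = s.pos t (mv s hN t) + s.pos (t + 1) (mv s hN t) := by
  rcases (mv_spec s hN ht).2 with (h | h) | ⟨-, hm⟩
  · omega
  · omega
  · exact hm

/-- the jumped-over peg of move `t` (junk if not a jump) -/
noncomputable def md (t : ℕ) : Peg N :=
  if h : ∃ m : Peg N, m ≠ mv s hN t ∧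
      2 * s.pos t m = s.pos t (mv s hN t) + s.pos (t + 1) (mv s hN t) then h.choose
  else Sum.inl ⟨0, hN⟩

lemma md_spec {t : ℕ} (ht : t < L) (hj : dlt s hN t = 2 ∨ dlt s hN t = -2) :
    md s hN t ≠ mv s hN t ∧
    2 * s.pos t (md s hN t) = 2 * s.pos t (mv s hN t) + dlt s hN t := by
  have h := exists_mid s hN ht hj
  unfold md
  rw [dif_pos h]
  obtain ⟨h1, h2⟩ := h.choose_spec
  refine ⟨h1, ?_⟩
  have : dlt s hN t = s.pos (t + 1) (mv s hN t) - s.pos t (mv s hN t) := rfl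
  omega

/-- stability: a peg that never moves keeps its position -/
lemma pos_stable {p : Peg N} {t1 t2 : ℕ} (h12 : t1 ≤ t2) (h2 : t2 ≤ L)
    (hp : ∀ u, t1 ≤ u → u < t2 → mv s hN u ≠ p) : s.pos t2 p = s.pos t1 p := by
  induction t2, h12 using Nat.le_induction with
  | base => rfl
  | succ n hn ih =>
    have hnL : n < L := by omega
    rw [mv_fix s hN hnL (fun h : p = mv s hN n => hp n hn (by omega) h.symm)]
    exact ih (by omega) (fun u hu1 hu2 => hp u hu1 (by omega))

/-- weight change of move `t` -/
def dW (s : PegSolution N L) (t : ℕ) : ℤ := weight s (t + 1) - weight s t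

lemma dW_eq {t : ℕ} (ht : t < L) : dW s t = col (mv s hN t) * dlt s hN t := by
  have key : ∀ q, q ≠ mv s hN t → s.pos (t + 1) q = s.pos t q := (mv_spec s hN ht).1
  unfold dW weight
  rcases hmv : mv s hN t with k | k
  · have hr : ∀ i : Fin N, s.pos (t + 1) (Sum.inr i) = s.pos t (Sum.inr i) := by
      intro i; exact key _ (by rw [hmv]; simp)
    have hl : ∀ i : Fin N, i ≠ k → s.pos (t + 1) (Sum.inl i) = s.pos t (Sum.inl i) := by
      intro i hi; exact key _ (by rw [hmv]; simp [hi])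
    have e1 : (∑ i : Fin N, (s.pos (t+1) (Sum.inl i) - s.pos 0 (Sum.inl i)))
        - ∑ i : Fin N, (s.pos t (Sum.inl i) - s.pos 0 (Sum.inl i))
        = s.pos (t+1) (Sum.inl k) - s.pos t (Sum.inl k) := by
      rw [← Finset.sum_sub_distrib]
      rw [Finset.sum_eq_single k]
      · ring
      · intro i _ hi; rw [hl i hi]; ring
      · simp
    have e2 : (∑ i : Fin N, (s.pos 0 (Sum.inr i) - s.pos (t+1) (Sum.inr i)))
        - ∑ i : Fin N, (s.pos 0 (Sum.inr i) - s.pos t (Sum.inr i)) = 0 := by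
      rw [← Finset.sum_sub_distrib]
      apply Finset.sum_eq_zero
      intro i _; rw [hr i]; ring
    have : dlt s hN t = s.pos (t+1) (Sum.inl k) - s.pos t (Sum.inl k) := by
      unfold dlt; rw [hmv]
    rw [col_inl, one_mul, this]
    omega
  · have hr : ∀ i : Fin N, s.pos (t + 1) (Sum.inl i) = s.pos t (Sum.inl i) := by
      intro i; exact key _ (by rw [hmv]; simp)
    have hl : ∀ i : Fin N, i ≠ k → s.pos (t + 1) (Sum.inr i) = s.pos t (Sum.inr i) := by
      intro i hi; exact key _ (by rw [hmv]; simp [hi])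
    have e1 : (∑ i : Fin N, (s.pos (t+1) (Sum.inl i) - s.pos 0 (Sum.inl i)))
        - ∑ i : Fin N, (s.pos t (Sum.inl i) - s.pos 0 (Sum.inl i)) = 0 := by
      rw [← Finset.sum_sub_distrib]
      apply Finset.sum_eq_zero
      intro i _; rw [hr i]; ring
    have e2 : (∑ i : Fin N, (s.pos 0 (Sum.inr i) - s.pos (t+1) (Sum.inr i)))
        - ∑ i : Fin N, (s.pos 0 (Sum.inr i) - s.pos t (Sum.inr i))
        = -(s.pos (t+1) (Sum.inr k) - s.pos t (Sum.inr k)) := by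
      rw [← Finset.sum_sub_distrib]
      rw [Finset.sum_eq_single k]
      · ring
      · intro i _ hi; rw [hl i hi]; ring
      · simp
    have : dlt s hN t = s.pos (t+1) (Sum.inr k) - s.pos t (Sum.inr k) := by
      unfold dlt; rw [hmv]
    rw [col_inr, this]
    omega

lemma dW_mem {t : ℕ} (ht : t < L) :
    dW s t = 1 ∨ dW s t = -1 ∨ dW s t = 2 ∨ dW s t = -2 := by
  rw [dW_eq s hN ht]
  rcases col_cases (mv s hN t) with h | h <;> rw [h] <;>
    rcases dlt_mem s hN ht with h' | h' | h' | h' <;> rw [h'] <;> norm_num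

lemma jump_of_dW2 {t : ℕ} (ht : t < L) (hw : dW s t = 2 ∨ dW s t = -2) :
    dlt s hN t = 2 ∨ dlt s hN t = -2 := by
  rw [dW_eq s hN ht] at hw
  rcases col_cases (mv s hN t) with h | h <;> rw [h] at hw <;>
    rcases dlt_mem s hN ht with h' | h' | h' | h' <;> rw [h'] at hw <;> omega

omit hN in
/-- the position of a peg is in range -/
lemma pos_range {t : ℕ} (ht : t ≤ L) (p : Peg N) :
    1 ≤ s.pos t p ∧ s.pos t p ≤ 2 * N + 1 := s.mem_range t ht p

omit hN in lemma pos_inj {t : ℕ} (ht : t ≤ L) {p q : Peg N} (h : p ≠ q) : s.pos t p ≠ s.pos t q :=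
  fun he => h (s.inj t ht p q he)

omit hN in
/-- uniqueness of the empty cell -/
lemma empty_unique {t : ℕ} (ht : t ≤ L) {c c' : ℤ}
    (hc1 : 1 ≤ c) (hc2 : c ≤ 2 * N + 1) (hc1' : 1 ≤ c') (hc2' : c' ≤ 2 * N + 1)
    (hc : ∀ p, s.pos t p ≠ c) (hc' : ∀ p, s.pos t p ≠ c') : c = c' := by
  classical
  set F : Finset ℤ := (Finset.Icc 1 (2 * N + 1)) \ Finset.image (s.pos t) Finset.univ with hF
  have hinj : Function.Injective (s.pos t) := by
    intro p q h; exact s.inj t ht p q h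
  have hsub : Finset.image (s.pos t) Finset.univ ⊆ Finset.Icc 1 (2 * N + 1) := by
    intro x hx
    simp only [Finset.mem_image] at hx
    obtain ⟨p, -, rfl⟩ := hx
    have := s.mem_range t ht p
    simp only [Finset.mem_Icc]
    exact this
  have hcard1 : (Finset.image (s.pos t) Finset.univ).card = 2 * N := by
    rw [Finset.card_image_of_injective _ hinj, Finset.card_univ]
    simp [Fintype.card_sum, Fintype.card_fin]
    omega
  have hcard2 : (Finset.Icc (1:ℤ) (2 * N + 1)).card = 2 * N + 1 := by
    rw [Int.card_Icc]
    omega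
  have hcardF : F.card = 1 := by
    rw [hF, Finset.card_sdiff_of_subset hsub, hcard1, hcard2]
    omega
  have hcF : c ∈ F := by
    simp only [hF, Finset.mem_sdiff, Finset.mem_Icc, Finset.mem_image]
    refine ⟨⟨hc1, hc2⟩, ?_⟩
    rintro ⟨p, -, hp⟩
    exact hc p hp
  have hcF' : c' ∈ F := by
    simp only [hF, Finset.mem_sdiff, Finset.mem_Icc, Finset.mem_image]
    refine ⟨⟨hc1', hc2'⟩, ?_⟩
    rintro ⟨p, -, hp⟩
    exact hc' p hp
  exact Finset.card_le_one.mp (le_of_eq hcardF) c hcF c' hcF'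

/-- the target of a move is unoccupied before the move -/
lemma tgt_unocc {t : ℕ} (ht : t + 1 ≤ L) (p : Peg N) :
    s.pos t p ≠ s.pos (t + 1) (mv s hN t) := by
  have htL : t < L := ht
  by_cases hp : p = mv s hN t
  · subst hp
    intro h
    have : dlt s hN t = 0 := by unfold dlt; omega
    rcases dlt_mem s hN htL with h' | h' | h' | h' <;> omega
  · rw [← mv_fix s hN htL hp]
    exact pos_inj s ht hp

/-- the source of a move is unoccupied after the move -/
lemma src_unocc {t : ℕ} (ht : t + 1 ≤ L) (p : Peg N) :
    s.pos (t + 1) p ≠ s.pos t (mv s hN t) := by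
  have htL : t < L := ht
  by_cases hp : p = mv s hN t
  · subst hp
    intro h
    have : dlt s hN t = 0 := by unfold dlt; omega
    rcases dlt_mem s hN htL with h' | h' | h' | h' <;> omega
  · rw [mv_fix s hN htL hp]
    exact pos_inj s (by omega) hp

/-- consecutive moves: the target of the next move is the source of this one -/
lemma tgt_succ {t : ℕ} (ht : t + 1 < L) :
    s.pos (t + 2) (mv s hN (t + 1)) = s.pos t (mv s hN t) := by
  have h1 : t + 2 ≤ L := ht
  have h2 : t + 1 ≤ L := by omega
  refine empty_unique s (show t + 1 ≤ L by omega) ?_ ?_ ?_ ?_ ?_ ?_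
  · exact (pos_range s h1 (mv s hN (t+1))).1
  · exact (pos_range s h1 (mv s hN (t+1))).2
  · exact (pos_range s (by omega) (mv s hN t)).1
  · exact (pos_range s (by omega) (mv s hN t)).2
  · exact fun p => tgt_unocc s hN h1 p
  · exact fun p => src_unocc s hN h2 p

end PegAux
namespace PegAux
open Finset

variable {N L : ℕ} (s : PegSolution N L) (hN : 0 < N)
include hN

/-- full structure of a crossing move -/
lemma cross_data {i j : Fin N} {t : ℕ} (ht : t < L) (h : CrossesAt s i j t) :
    (dlt s hN t = 2 ∨ dlt s hN t = -2) ∧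
    ((mv s hN t = Sum.inl i ∧ md s hN t = Sum.inr j) ∨
     (mv s hN t = Sum.inr j ∧ md s hN t = Sum.inl i)) ∧
    ((s.pos t (Sum.inl i) - s.pos t (Sum.inr j) = -1 ∧ dW s t = 2) ∨
     (s.pos t (Sum.inl i) - s.pos t (Sum.inr j) = 1 ∧ dW s t = -2)) := by
  have hd0 : s.pos t (Sum.inl i) ≠ s.pos t (Sum.inr j) :=
    pos_inj s (le_of_lt ht) (by simp)
  have hprod : (s.pos t (Sum.inl i) - s.pos t (Sum.inr j)) *
      (s.pos (t+1) (Sum.inl i) - s.pos (t+1) (Sum.inr j)) < 0 := h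
  have hmv : mv s hN t = Sum.inl i ∨ mv s hN t = Sum.inr j := by
    by_contra hcon
    push_neg at hcon
    have e1 : s.pos (t+1) (Sum.inl i) = s.pos t (Sum.inl i) :=
      mv_fix s hN ht (Ne.symm hcon.1)
    have e2 : s.pos (t+1) (Sum.inr j) = s.pos t (Sum.inr j) :=
      mv_fix s hN ht (Ne.symm hcon.2)
    rw [e1, e2] at hprod
    nlinarith [mul_self_nonneg (s.pos t (Sum.inl i) - s.pos t (Sum.inr j))]
  rcases hmv with hmv | hmv
  · have hfix : s.pos (t+1) (Sum.inr j) = s.pos t (Sum.inr j) :=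
      mv_fix s hN ht (by rw [hmv]; simp)
    have hdlt : s.pos (t+1) (Sum.inl i) = s.pos t (Sum.inl i) + dlt s hN t := by
      have : dlt s hN t = s.pos (t+1) (mv s hN t) - s.pos t (mv s hN t) := rfl
      rw [hmv] at this; omega
    rw [hdlt, hfix] at hprod
    have hW : dW s t = dlt s hN t := by
      rw [dW_eq s hN ht, hmv, col_inl, one_mul]
    rcases dlt_mem s hN ht with hd | hd | hd | hd
    · rw [hd] at hprod
      rcases mul_neg_iff.mp hprod with ⟨h1, h2⟩ | ⟨h1, h2⟩ <;> omega
    · rw [hd] at hprod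
      rcases mul_neg_iff.mp hprod with ⟨h1, h2⟩ | ⟨h1, h2⟩ <;> omega
    · have hjump : dlt s hN t = 2 ∨ dlt s hN t = -2 := Or.inl hd
      have hx : s.pos t (Sum.inl i) - s.pos t (Sum.inr j) = -1 := by
        rw [hd] at hprod
        rcases mul_neg_iff.mp hprod with ⟨h1, h2⟩ | ⟨h1, h2⟩ <;> omega
      obtain ⟨hne, hmid⟩ := md_spec s hN ht hjump
      rw [hmv] at hmid
      have : s.pos t (md s hN t) = s.pos t (Sum.inr j) := by omega
      have hmd : md s hN t = Sum.inr j := s.inj t (le_of_lt ht) _ _ this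
      exact ⟨hjump, Or.inl ⟨hmv, hmd⟩, Or.inl ⟨hx, by omega⟩⟩
    · have hjump : dlt s hN t = 2 ∨ dlt s hN t = -2 := Or.inr hd
      have hx : s.pos t (Sum.inl i) - s.pos t (Sum.inr j) = 1 := by
        rw [hd] at hprod
        rcases mul_neg_iff.mp hprod with ⟨h1, h2⟩ | ⟨h1, h2⟩ <;> omega
      obtain ⟨hne, hmid⟩ := md_spec s hN ht hjump
      rw [hmv] at hmid
      have : s.pos t (md s hN t) = s.pos t (Sum.inr j) := by omega
      have hmd : md s hN t = Sum.inr j := s.inj t (le_of_lt ht) _ _ this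
      exact ⟨hjump, Or.inl ⟨hmv, hmd⟩, Or.inr ⟨hx, by omega⟩⟩
  · have hfix : s.pos (t+1) (Sum.inl i) = s.pos t (Sum.inl i) :=
      mv_fix s hN ht (by rw [hmv]; simp)
    have hdlt : s.pos (t+1) (Sum.inr j) = s.pos t (Sum.inr j) + dlt s hN t := by
      have : dlt s hN t = s.pos (t+1) (mv s hN t) - s.pos t (mv s hN t) := rfl
      rw [hmv] at this; omega
    rw [hdlt, hfix] at hprod
    have hW : dW s t = - dlt s hN t := by
      rw [dW_eq s hN ht, hmv, col_inr]; ring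
    rcases dlt_mem s hN ht with hd | hd | hd | hd
    · rw [hd] at hprod
      rcases mul_neg_iff.mp hprod with ⟨h1, h2⟩ | ⟨h1, h2⟩ <;> omega
    · rw [hd] at hprod
      rcases mul_neg_iff.mp hprod with ⟨h1, h2⟩ | ⟨h1, h2⟩ <;> omega
    · have hjump : dlt s hN t = 2 ∨ dlt s hN t = -2 := Or.inl hd
      have hx : s.pos t (Sum.inl i) - s.pos t (Sum.inr j) = 1 := by
        rw [hd] at hprod
        rcases mul_neg_iff.mp hprod with ⟨h1, h2⟩ | ⟨h1, h2⟩ <;> omega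
      obtain ⟨hne, hmid⟩ := md_spec s hN ht hjump
      rw [hmv] at hmid
      have : s.pos t (md s hN t) = s.pos t (Sum.inl i) := by omega
      have hmd : md s hN t = Sum.inl i := s.inj t (le_of_lt ht) _ _ this
      exact ⟨hjump, Or.inr ⟨hmv, hmd⟩, Or.inr ⟨hx, by omega⟩⟩
    · have hjump : dlt s hN t = 2 ∨ dlt s hN t = -2 := Or.inr hd
      have hx : s.pos t (Sum.inl i) - s.pos t (Sum.inr j) = -1 := by
        rw [hd] at hprod
        rcases mul_neg_iff.mp hprod with ⟨h1, h2⟩ | ⟨h1, h2⟩ <;> omega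
      obtain ⟨hne, hmid⟩ := md_spec s hN ht hjump
      rw [hmv] at hmid
      have : s.pos t (md s hN t) = s.pos t (Sum.inl i) := by omega
      have hmd : md s hN t = Sum.inl i := s.inj t (le_of_lt ht) _ _ this
      exact ⟨hjump, Or.inr ⟨hmv, hmd⟩, Or.inl ⟨hx, by omega⟩⟩

omit hN in
/-- at most one pair crosses at a given move -/
lemma pair_unique {i j i' j' : Fin N} {t : ℕ} (ht : t < L)
    (h1 : CrossesAt s i j t) (h2 : CrossesAt s i' j' t) : i = i' ∧ j = j' := by
  have hN : 0 < N := i.pos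
  obtain ⟨-, hc1, -⟩ := cross_data s hN ht h1
  obtain ⟨-, hc2, -⟩ := cross_data s hN ht h2
  rcases hc1 with ⟨e1, f1⟩ | ⟨e1, f1⟩ <;> rcases hc2 with ⟨e2, f2⟩ | ⟨e2, f2⟩
  · exact ⟨Sum.inl.inj (e1.symm.trans e2), Sum.inr.inj (f1.symm.trans f2)⟩
  · exact absurd (e1.symm.trans e2) (by simp)
  · exact absurd (e1.symm.trans e2) (by simp)
  · exact ⟨Sum.inl.inj (f1.symm.trans f2), Sum.inr.inj (e1.symm.trans e2)⟩

omit hN in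
lemma dd_keep_neg {i j : Fin N} {u t : ℕ}
    (hu : s.pos u (Sum.inl i) - s.pos u (Sum.inr j) < 0)
    (hut : u ≤ t) (htL : t ≤ L)
    (hnc : ∀ v, u ≤ v → v < t → ¬ CrossesAt s i j v) :
    s.pos t (Sum.inl i) - s.pos t (Sum.inr j) < 0 := by
  induction t, hut using Nat.le_induction with
  | base => exact hu
  | succ n hn ih =>
    have h1 : s.pos n (Sum.inl i) - s.pos n (Sum.inr j) < 0 :=
      ih (by omega) (fun v a b => hnc v a (by omega))
    have h2 : s.pos (n+1) (Sum.inl i) ≠ s.pos (n+1) (Sum.inr j) :=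
      pos_inj s htL (by simp)
    have h3 : s.pos (n+1) (Sum.inl i) - s.pos (n+1) (Sum.inr j) ≠ 0 :=
      sub_ne_zero_of_ne h2
    by_contra hcon
    push_neg at hcon
    exact hnc n hn (by omega)
      (show CrossesAt s i j n from mul_neg_of_neg_of_pos h1 (by omega))

omit hN in
lemma dd_keep_pos {i j : Fin N} {u t : ℕ}
    (hu : 0 < s.pos u (Sum.inl i) - s.pos u (Sum.inr j))
    (hut : u ≤ t) (htL : t ≤ L)
    (hnc : ∀ v, u ≤ v → v < t → ¬ CrossesAt s i j v) :
    0 < s.pos t (Sum.inl i) - s.pos t (Sum.inr j) := by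
  induction t, hut using Nat.le_induction with
  | base => exact hu
  | succ n hn ih =>
    have h1 : 0 < s.pos n (Sum.inl i) - s.pos n (Sum.inr j) :=
      ih (by omega) (fun v a b => hnc v a (by omega))
    have h2 : s.pos (n+1) (Sum.inl i) ≠ s.pos (n+1) (Sum.inr j) :=
      pos_inj s htL (by simp)
    have h3 : s.pos (n+1) (Sum.inl i) - s.pos (n+1) (Sum.inr j) ≠ 0 :=
      sub_ne_zero_of_ne h2
    by_contra hcon
    push_neg at hcon
    exact hnc n hn (by omega)
      (show CrossesAt s i j n from mul_neg_of_pos_of_neg h1 (by omega))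

omit hN in
lemma dd0_neg (i j : Fin N) : s.pos 0 (Sum.inl i) - s.pos 0 (Sum.inr j) < 0 := by
  rw [s.init_blue, s.init_red]
  have hi : (i : ℤ) < N := by exact_mod_cast i.isLt
  have hj : (0 : ℤ) ≤ (j : ℤ) := by positivity
  omega

omit hN in
lemma exists_cross (i j : Fin N) : ∃ t, t < L ∧ CrossesAt s i j t := by
  by_contra h
  push_neg at h
  have hL : s.pos L (Sum.inl i) - s.pos L (Sum.inr j) < 0 :=
    dd_keep_neg s (dd0_neg s i j) (Nat.zero_le L) le_rfl (fun v _ hv => h v hv)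
  have h1 := s.final_blue i
  have h2 := s.final_red j
  omega

end PegAux

namespace PegAux
open Finset

variable {N L : ℕ}

/-- first crossing time of the pair (i,j) -/
noncomputable def fc (s : PegSolution N L) (i j : Fin N) : ℕ := Nat.find (exists_cross s i j)

variable (s : PegSolution N L)

lemma fc_lt (i j : Fin N) : fc s i j < L := (Nat.find_spec (exists_cross s i j)).1

lemma fc_cross (i j : Fin N) : CrossesAt s i j (fc s i j) :=
  (Nat.find_spec (exists_cross s i j)).2

lemma fc_before (i j : Fin N) : ∀ u < fc s i j, ¬ CrossesAt s i j u :=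
  fun u hu hc => Nat.find_min (exists_cross s i j) hu ⟨lt_trans hu (fc_lt s i j), hc⟩

lemma card_FC : ((Finset.range L).filter (fun t => IsFirstCross s t)).card = N * N := by
  classical
  have himg : Finset.image (fun p : Fin N × Fin N => fc s p.1 p.2) Finset.univ
      = (Finset.range L).filter (fun t => IsFirstCross s t) := by
    apply Finset.Subset.antisymm
    · intro t htm
      simp only [Finset.mem_image] at htm
      obtain ⟨⟨i, j⟩, -, rfl⟩ := htm
      simp only [Finset.mem_filter, Finset.mem_range]
      exact ⟨fc_lt s i j, ⟨i, j, fc_cross s i j, fc_before s i j⟩⟩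
    · intro t htm
      simp only [Finset.mem_filter, Finset.mem_range] at htm
      obtain ⟨htL, i, j, hc, hbef⟩ := htm
      simp only [Finset.mem_image]
      refine ⟨⟨i, j⟩, Finset.mem_univ _, ?_⟩
      have h1 : fc s i j ≤ t := Nat.find_min' _ ⟨htL, hc⟩
      rcases lt_or_eq_of_le h1 with h | h
      · exact absurd (fc_cross s i j) (hbef _ h)
      · exact h
  have hinj : Set.InjOn (fun p : Fin N × Fin N => fc s p.1 p.2)
      ↑(Finset.univ : Finset (Fin N × Fin N)) := by
    rintro ⟨i, j⟩ - ⟨i', j'⟩ - he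
    simp only at he
    have h1 : CrossesAt s i j (fc s i' j') := he ▸ fc_cross s i j
    obtain ⟨hi, hj⟩ := pair_unique s (fc_lt s i' j') h1 (fc_cross s i' j')
    simp [hi, hj]
  rw [← himg, Finset.card_image_of_injOn hinj, Finset.card_univ]
  simp [Fintype.card_prod]

lemma dW_FC {t : ℕ} (ht : t < L) (h : IsFirstCross s t) : dW s t = 2 := by
  obtain ⟨i, j, hc, hbef⟩ := h
  have hN : 0 < N := i.pos
  have hdd : s.pos t (Sum.inl i) - s.pos t (Sum.inr j) < 0 :=
    dd_keep_neg s (dd0_neg s i j) (Nat.zero_le t) (le_of_lt ht) (fun v _ hv => hbef v hv)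
  obtain ⟨-, -, hdir⟩ := cross_data s hN ht hc
  rcases hdir with ⟨-, h2⟩ | ⟨hd, -⟩
  · exact h2
  · omega

lemma sum_image_Icc (f : Fin N → ℤ) (lo hi : ℤ) (hcnt : hi = lo + N - 1)
    (hinj : ∀ i i', f i = f i' → i = i')
    (hmem : ∀ i, lo ≤ f i ∧ f i ≤ hi) :
    ∑ i, f i = ∑ x ∈ Finset.Icc lo hi, x := by
  classical
  have hinj' : Function.Injective f := fun i i' h => hinj i i' h
  have hsub : Finset.image f Finset.univ ⊆ Finset.Icc lo hi := by
    intro x hx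
    simp only [Finset.mem_image] at hx
    obtain ⟨i, -, rfl⟩ := hx
    simp only [Finset.mem_Icc]
    exact hmem i
  have hcard : (Finset.Icc lo hi).card ≤ (Finset.image f Finset.univ).card := by
    rw [Finset.card_image_of_injective _ hinj', Finset.card_univ, Fintype.card_fin, Int.card_Icc]
    omega
  have heq := Finset.eq_of_subset_of_card_le hsub hcard
  rw [← heq, Finset.sum_image (fun i _ i' _ h => hinj' h)]

lemma sum_Icc_shift (n : ℕ) (c : ℤ) :
    ∑ x ∈ Finset.Icc (1 + c) (n + c), x = (∑ x ∈ Finset.Icc (1:ℤ) n, x) + n * c := by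
  rw [← Finset.map_add_right_Icc, Finset.sum_map]
  simp only [addRightEmbedding_apply]
  rw [Finset.sum_add_distrib, Finset.sum_const, Int.card_Icc, nsmul_eq_mul]
  congr 1
  have : ((n:ℤ) + 1 - 1).toNat = n := by omega
  rw [this]

lemma weight_L : weight s L = 2 * N * (N + 1) := by
  have hBL : ∑ i : Fin N, s.pos L (Sum.inl i) = ∑ x ∈ Finset.Icc ((N:ℤ)+2) (2*N+1), x := by
    apply sum_image_Icc _ _ _ (by push_cast; ring)
    · intro i i' h
      exact Sum.inl.inj (s.inj L le_rfl _ _ h)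
    · intro i
      exact ⟨s.final_blue i, (pos_range s le_rfl _).2⟩
  have hRL : ∑ i : Fin N, s.pos L (Sum.inr i) = ∑ x ∈ Finset.Icc (1:ℤ) N, x := by
    apply sum_image_Icc _ _ _ (by push_cast; ring)
    · intro i i' h
      exact Sum.inr.inj (s.inj L le_rfl _ _ h)
    · intro i
      exact ⟨(pos_range s le_rfl _).1, s.final_red i⟩
  have hB0 : ∑ i : Fin N, s.pos 0 (Sum.inl i) = ∑ x ∈ Finset.Icc (1:ℤ) N, x := by
    apply sum_image_Icc _ _ _ (by push_cast; ring)
    · intro i i' h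
      exact Sum.inl.inj (s.inj 0 (Nat.zero_le L) _ _ h)
    · intro i
      rw [s.init_blue]
      have : (i:ℤ) < N := by exact_mod_cast i.isLt
      constructor <;> omega
  have hR0 : ∑ i : Fin N, s.pos 0 (Sum.inr i) = ∑ x ∈ Finset.Icc ((N:ℤ)+2) (2*N+1), x := by
    apply sum_image_Icc _ _ _ (by push_cast; ring)
    · intro i i' h
      exact Sum.inr.inj (s.inj 0 (Nat.zero_le L) _ _ h)
    · intro i
      rw [s.init_red]
      have : (i:ℤ) < N := by exact_mod_cast i.isLt
      have : (0:ℤ) ≤ (i:ℤ) := by positivity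
      constructor <;> omega
  have hshift : ∑ x ∈ Finset.Icc ((N:ℤ)+2) (2*N+1), x
      = (∑ x ∈ Finset.Icc (1:ℤ) N, x) + N * (N+1) := by
    have e : Finset.Icc ((N:ℤ)+2) (2*N+1) = Finset.Icc (1 + ((N:ℤ)+1)) ((N:ℤ) + ((N:ℤ)+1)) := by
      congr 1 <;> ring
    rw [e, sum_Icc_shift]
  unfold weight
  rw [Finset.sum_sub_distrib, Finset.sum_sub_distrib, hBL, hRL, hB0, hR0, hshift]
  ring

lemma sum_dW : ∑ t ∈ Finset.range L, dW s t = 2 * N * (N + 1) := by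
  have h0 : weight s 0 = 0 := by
    unfold weight
    simp
  have htel : ∑ t ∈ Finset.range L, (weight s (t+1) - weight s t) = weight s L - weight s 0 :=
    Finset.sum_range_sub (fun t => weight s t) L
  calc ∑ t ∈ Finset.range L, dW s t
      = ∑ t ∈ Finset.range L, (weight s (t+1) - weight s t) := rfl
    _ = weight s L - weight s 0 := htel
    _ = 2 * N * (N + 1) := by rw [h0, weight_L s]; ring

end PegAux
namespace PegAux
open Finset

variable {N L : ℕ}

/-- event: peg p moves or is jumped over at move t -/
def Ev (s : PegSolution N L) (hN : 0 < N) (p : Peg N) (t : ℕ) : Prop :=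
  mv s hN t = p ∨ ((dlt s hN t = 2 ∨ dlt s hN t = -2) ∧ md s hN t = p)

/-- the last move of the mover or mid of `t` before `t` -/
noncomputable def pv (s : PegSolution N L) (hN : 0 < N) (t : ℕ) : ℕ :=
  Nat.findGreatest (fun v => mv s hN v = mv s hN t ∨ mv s hN v = md s hN t) (t - 1)

variable (s : PegSolution N L) (hN : 0 < N)
include hN

lemma ev_self {t : ℕ} (hj : dlt s hN t = 2 ∨ dlt s hN t = -2) :
    Ev s hN (md s hN t) t := Or.inr ⟨hj, rfl⟩

lemma pv_lt {t : ℕ} : pv s hN t ≤ t - 1 := by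
  unfold pv
  exact Nat.findGreatest_le (P := fun v => mv s hN v = mv s hN t ∨ mv s hN v = md s hN t) (t - 1)

lemma pv_spec {t v0 : ℕ} (h0 : v0 < t)
    (hP : mv s hN v0 = mv s hN t ∨ mv s hN v0 = md s hN t) :
    mv s hN (pv s hN t) = mv s hN t ∨ mv s hN (pv s hN t) = md s hN t := by
  unfold pv
  exact Nat.findGreatest_spec (P := fun v => mv s hN v = mv s hN t ∨ mv s hN v = md s hN t)
    (by omega : v0 ≤ t - 1) hP

lemma pv_max {t v' : ℕ} (h1 : pv s hN t < v') (h2 : v' < t) :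
    mv s hN v' ≠ mv s hN t ∧ mv s hN v' ≠ md s hN t := by
  unfold pv at h1
  have h := Nat.findGreatest_is_greatest
    (P := fun v => mv s hN v = mv s hN t ∨ mv s hN v = md s hN t) h1 (by omega : v' ≤ t - 1)
  exact ⟨fun he => h (Or.inl he), fun he => h (Or.inr he)⟩

lemma fwd_dir {t : ℕ} (ht : t < L) (hw : dW s t = 2) :
    (col (mv s hN t) = 1 ∧ dlt s hN t = 2) ∨
    (col (mv s hN t) = -1 ∧ dlt s hN t = -2) := by
  have h := dW_eq s hN ht
  rcases col_cases (mv s hN t) with hc | hc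
  · left
    refine ⟨hc, ?_⟩
    rcases dlt_mem s hN ht with hd | hd | hd | hd <;> rw [hc, hd] at h <;> omega
  · right
    refine ⟨hc, ?_⟩
    rcases dlt_mem s hN ht with hd | hd | hd | hd <;> rw [hc, hd] at h <;> omega

/-- Main invariant after a jump: until the next event of the jumped-over peg,
both pegs stay put and the hole stays on the source side. -/
lemma lemE_inv {t : ℕ} (ht : t < L)
    (hj : dlt s hN t = 2 ∨ dlt s hN t = -2) :
    ∀ u, t < u → u ≤ L →
      (∀ v, t < v → v < u → ¬ Ev s hN (md s hN t) v) →
      s.pos u (md s hN t) = s.pos t (md s hN t) ∧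
      s.pos u (mv s hN t) = s.pos t (mv s hN t) + dlt s hN t ∧
      (u < L → dlt s hN t * (s.pos (u+1) (mv s hN u) - s.pos t (mv s hN t)) ≤ 0) := by
  intro u hu
  induction u, hu using Nat.le_induction with
  | base =>
    intro huL hnoev
    simp only [Nat.succ_eq_add_one] at *
    refine ⟨mv_fix s hN ht (md_spec s hN ht hj).1, ?_, ?_⟩
    · have hd : dlt s hN t = s.pos (t+1) (mv s hN t) - s.pos t (mv s hN t) := rfl
      omega
    · intro hL1
      have e : s.pos (t+1+1) (mv s hN (t+1)) = s.pos t (mv s hN t) := tgt_succ s hN hL1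
      rw [e]
      simp
  | succ n hn ih =>
    intro hn1L hnoev
    have hnL : n < L := by omega
    obtain ⟨ihY, ihX, ihT⟩ := ih (by omega) (fun v hv1 hv2 => hnoev v hv1 (by omega))
    have hTn := ihT hnL
    have hnoevn := hnoev n (by omega) (by omega)
    unfold Ev at hnoevn
    push_neg at hnoevn
    obtain ⟨hmvn, hmdn⟩ := hnoevn
    have hmdspec_t := (md_spec s hN ht hj).2
    have hdn : dlt s hN n = s.pos (n+1) (mv s hN n) - s.pos n (mv s hN n) := rfl
    have hdnmem := dlt_mem s hN hnL
    have hmx : mv s hN n ≠ mv s hN t := by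
      intro hme
      have e1 : s.pos n (mv s hN n) = s.pos n (mv s hN t) := by rw [hme]
      have hjn : dlt s hN n = 2 ∨ dlt s hN n = -2 := by
        rcases hj with h | h <;> rw [h] at hTn hmdspec_t ihX <;> omega
      have hmdn_eq := (md_spec s hN hnL hjn).2
      have hmd_eq : s.pos n (md s hN n) = s.pos n (md s hN t) := by
        rcases hj with h | h <;> rw [h] at hTn hmdspec_t ihX <;> omega
      exact hmdn hjn (s.inj n (by omega) _ _ hmd_eq)
    have hy : s.pos (n+1) (md s hN t) = s.pos n (md s hN t) :=
      mv_fix s hN hnL (Ne.symm hmvn)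
    have hx : s.pos (n+1) (mv s hN t) = s.pos n (mv s hN t) :=
      mv_fix s hN hnL (Ne.symm hmx)
    refine ⟨by rw [hy, ihY], by rw [hx]; exact ihX, ?_⟩
    intro hL2
    have e : s.pos (n+1+1) (mv s hN (n+1)) = s.pos n (mv s hN n) := tgt_succ s hN hL2
    rw [e]
    have hne1 : s.pos n (mv s hN n) ≠ s.pos n (mv s hN t) := pos_inj s (by omega) hmx
    have hne2 : s.pos n (mv s hN n) ≠ s.pos n (md s hN t) := pos_inj s (by omega) hmvn
    rcases hj with h | h <;> rw [h] at hTn hmdspec_t ihX ⊢ <;> omega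

/-- the first event of the jumped-over peg after a same-color forward jump is
weight-decreasing, and is a move of that peg or a jump of the original mover
back over it -/
lemma lemE_first {t u : ℕ} (ht : t < L)
    (hj : dlt s hN t = 2 ∨ dlt s hN t = -2)
    (hsame : col (mv s hN t) = col (md s hN t))
    (hw : dW s t = 2)
    (hu : t < u) (huL : u < L)
    (hfst : ∀ v, t < v → v < u → ¬ Ev s hN (md s hN t) v)
    (hev : Ev s hN (md s hN t) u) :
    dW s u < 0 ∧ (mv s hN u = md s hN t ∨
      ((dlt s hN u = 2 ∨ dlt s hN u = -2) ∧ md s hN u = md s hN t ∧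
        mv s hN u = mv s hN t)) := by
  obtain ⟨ihY, ihX, ihT⟩ := lemE_inv s hN ht hj u hu (le_of_lt huL) hfst
  have hTn := ihT huL
  have hdir := fwd_dir s hN ht hw
  have hmdspec_t := (md_spec s hN ht hj).2
  have hdu : dlt s hN u = s.pos (u+1) (mv s hN u) - s.pos u (mv s hN u) := rfl
  have hdumem := dlt_mem s hN huL
  unfold Ev at hev
  rcases hev with hev | ⟨hju, hmdu⟩
  · refine ⟨?_, Or.inl hev⟩
    rw [dW_eq s hN huL, hev, ← hsame]
    have hpos : s.pos u (mv s hN u) = s.pos u (md s hN t) := by rw [hev]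
    rcases hdir with ⟨hc, hd⟩ | ⟨hc, hd⟩ <;> rw [hc] <;>
      rw [hd] at hTn hmdspec_t <;> omega
  · have hmdeq := (md_spec s hN huL hju).2
    have e0 : s.pos u (md s hN u) = s.pos u (md s hN t) := by rw [hmdu]
    have hxu : s.pos u (mv s hN u) = s.pos u (mv s hN t) := by
      rcases hdir with ⟨hc, hd⟩ | ⟨hc, hd⟩ <;> rw [hd] at hTn hmdspec_t ihX <;>
        rcases hju with h2 | h2 <;> rw [h2] at hmdeq hdu <;> omega
    have hmveq : mv s hN u = mv s hN t := s.inj u (le_of_lt huL) _ _ hxu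
    have hdueq : dlt s hN u = - dlt s hN t := by
      rcases hdir with ⟨hc, hd⟩ | ⟨hc, hd⟩ <;> rw [hd] at hTn hmdspec_t ihX ⊢ <;>
        rcases hju with h2 | h2 <;> rw [h2] at hmdeq hdu ⊢ <;> omega
    refine ⟨?_, Or.inr ⟨hju, hmdu, hmveq⟩⟩
    rw [dW_eq s hN huL, hmveq, hdueq]
    rcases hdir with ⟨hc, hd⟩ | ⟨hc, hd⟩ <;> rw [hc, hd] <;> norm_num

/-- between a same-color forward jump and the next event of the jumped-over
peg there is no event of the jumper either -/
lemma lemE_noXev {t u : ℕ} (ht : t < L)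
    (hj : dlt s hN t = 2 ∨ dlt s hN t = -2)
    (hu : t < u) (huL : u ≤ L)
    (hfst : ∀ v, t < v → v < u → ¬ Ev s hN (md s hN t) v) :
    ∀ v, t < v → v < u → ¬ Ev s hN (mv s hN t) v := by
  intro v hv1 hv2 hev
  obtain ⟨ihY, ihX, ihT⟩ :=
    lemE_inv s hN ht hj v hv1 (by omega) (fun w a b => hfst w a (by omega))
  have hvL : v < L := by omega
  have hTn := ihT hvL
  have hmdspec_t := (md_spec s hN ht hj).2
  have hdv : dlt s hN v = s.pos (v+1) (mv s hN v) - s.pos v (mv s hN v) := rfl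
  have hdvmem := dlt_mem s hN hvL
  have hnoevv := hfst v hv1 hv2
  unfold Ev at hnoevv hev
  push_neg at hnoevv
  obtain ⟨hmvv, hmdv'⟩ := hnoevv
  rcases hev with hev | ⟨hjv, hmdv⟩
  · -- the jumper moves again before the next Y-event: impossible
    have e1 : s.pos v (mv s hN v) = s.pos v (mv s hN t) := by rw [hev]
    have hjn : dlt s hN v = 2 ∨ dlt s hN v = -2 := by
      rcases hj with h | h <;> rw [h] at hTn hmdspec_t ihX <;> omega
    have hmdn_eq := (md_spec s hN hvL hjn).2
    have hmd_eq : s.pos v (md s hN v) = s.pos v (md s hN t) := by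
      rcases hj with h | h <;> rw [h] at hTn hmdspec_t ihX <;> omega
    exact hmdv' hjn (s.inj v (by omega) _ _ hmd_eq)
  · -- somebody jumps over the jumper: impossible
    have hmdeq := (md_spec s hN hvL hjv).2
    have e0 : s.pos v (md s hN v) = s.pos v (mv s hN t) := by rw [hmdv]
    have hun := tgt_unocc s hN (show v+1 ≤ L by omega) (md s hN t)
    have hne2 : s.pos v (mv s hN v) ≠ s.pos v (md s hN t) :=
      pos_inj s (by omega) hmvv
    rcases hj with h | h <;> rw [h] at hTn hmdspec_t ihX <;>
      rcases hjv with h2 | h2 <;> rw [h2] at hmdeq hdv <;> omega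

end PegAux
namespace PegAux
open Finset

variable {N L : ℕ} (s : PegSolution N L) (hN : 0 < N)
include hN

/-- if the jumped-over peg of a same-color forward jump has no further events,
then the last prior move of the two pegs involved is weight-decreasing -/
lemma none_case {t : ℕ} (ht : t < L)
    (hj : dlt s hN t = 2 ∨ dlt s hN t = -2)
    (hsame : col (mv s hN t) = col (md s hN t))
    (hw : dW s t = 2)
    (hnone : ∀ u, t < u → u < L → ¬ Ev s hN (md s hN t) u) :
    pv s hN t < t ∧ dW s (pv s hN t) < 0 ∧
    (mv s hN (pv s hN t) = md s hN t ∨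
      ((dlt s hN (pv s hN t) = 2 ∨ dlt s hN (pv s hN t) = -2) ∧
       md s hN (pv s hN t) = md s hN t ∧ mv s hN (pv s hN t) = mv s hN t)) ∧
    (∀ v', pv s hN t < v' → v' < t → ¬ Ev s hN (md s hN t) v') := by
  have hmdspec_t := (md_spec s hN ht hj).2
  have hmdne := (md_spec s hN ht hj).1
  -- a prior move of the jumper or the mid peg exists
  have hprior : ∃ v, v < t ∧ (mv s hN v = mv s hN t ∨ mv s hN v = md s hN t) := by
    by_contra hcon
    push_neg at hcon
    have hX0 : s.pos t (mv s hN t) = s.pos 0 (mv s hN t) :=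
      pos_stable s hN (Nat.zero_le t) (le_of_lt ht)
        (fun u _ hu2 he => (hcon u hu2).1 he)
    have hY0 : s.pos t (md s hN t) = s.pos 0 (md s hN t) :=
      pos_stable s hN (Nat.zero_le t) (le_of_lt ht)
        (fun u _ hu2 he => (hcon u hu2).2 he)
    have hYL : s.pos L (md s hN t) = s.pos t (md s hN t) := by
      apply pos_stable s hN (le_of_lt ht) le_rfl
      intro u hu1 hu2
      rcases eq_or_lt_of_le hu1 with rfl | h
      · exact fun he => hmdne he.symm
      · exact fun he => hnone u h hu2 (Or.inl he)
    rcases fwd_dir s hN ht hw with ⟨hc, hd⟩ | ⟨hc, hd⟩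
    · obtain ⟨x, hx⟩ := col_eq_one hc
      obtain ⟨y, hy⟩ := col_eq_one (show col (md s hN t) = 1 by rw [← hsame]; exact hc)
      have h1 := s.init_blue x
      have h2 := s.final_blue y
      rw [hx] at hX0
      rw [hy] at hY0 hYL
      rw [hx, hy] at hmdspec_t
      rw [hd] at hmdspec_t
      have hxN : (x : ℤ) < N := by exact_mod_cast x.isLt
      omega
    · obtain ⟨x, hx⟩ := col_eq_negone hc
      obtain ⟨y, hy⟩ := col_eq_negone (show col (md s hN t) = -1 by rw [← hsame]; exact hc)
      have h1 := s.init_red x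
      have h2 := s.final_red y
      rw [hx] at hX0
      rw [hy] at hY0 hYL
      rw [hx, hy] at hmdspec_t
      rw [hd] at hmdspec_t
      have hx0 : (0 : ℤ) ≤ (x : ℤ) := by positivity
      omega
  obtain ⟨v0, hv0, hP0⟩ := hprior
  have hspec := pv_spec s hN hv0 hP0
  have hvt : pv s hN t < t := by
    have := pv_lt s hN (t := t)
    omega
  -- stability of positions on (pv, t]
  have hstab : ∀ u, pv s hN t < u → u ≤ t →
      s.pos u (mv s hN t) = s.pos t (mv s hN t) ∧
      s.pos u (md s hN t) = s.pos t (md s hN t) := by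
    intro u h1 h2
    constructor
    · exact (pos_stable s hN h2 (le_of_lt ht)
        (fun w hw1 hw2 => (pv_max s hN (by omega) hw2).1)).symm
    · exact (pos_stable s hN h2 (le_of_lt ht)
        (fun w hw1 hw2 => (pv_max s hN (by omega) hw2).2)).symm
  -- downward bound: targets on (pv, t] are beyond the landing cell of t
  have htgt_t : s.pos (t+1) (mv s hN t) = s.pos t (mv s hN t) + dlt s hN t := by
    have hd : dlt s hN t = s.pos (t+1) (mv s hN t) - s.pos t (mv s hN t) := rfl
    omega
  have hdown : ∀ u, pv s hN t < u → u ≤ t →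
      dlt s hN t * (s.pos (u+1) (mv s hN u) -
        (s.pos t (mv s hN t) + dlt s hN t)) ≥ 0 := by
    by_contra hcon
    push_neg at hcon
    obtain ⟨u0, h1, h2, h3⟩ := hcon
    set Q : ℕ → Prop := fun u => pv s hN t < u ∧ u ≤ t ∧
      dlt s hN t * (s.pos (u+1) (mv s hN u) -
        (s.pos t (mv s hN t) + dlt s hN t)) < 0 with hQ
    have hQ0 : Q u0 := ⟨h1, h2, h3⟩
    have hQ1 : Q (Nat.findGreatest Q t) := Nat.findGreatest_spec (by omega : u0 ≤ t) hQ0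
    set u1 := Nat.findGreatest Q t with hu1def
    obtain ⟨hu1a, hu1b, hu1c⟩ := hQ1
    have hu1t : u1 < t := by
      rcases eq_or_lt_of_le hu1b with he | h
      · exfalso
        rw [he, htgt_t] at hu1c
        simp at hu1c
      · exact h
    have hnext : dlt s hN t * (s.pos (u1+1+1) (mv s hN (u1+1)) -
        (s.pos t (mv s hN t) + dlt s hN t)) ≥ 0 := by
      by_contra hc2
      push_neg at hc2
      exact Nat.findGreatest_is_greatest (lt_add_one u1) (by omega)
        ⟨by omega, by omega, hc2⟩
    have hchain : s.pos (u1+1+1) (mv s hN (u1+1)) = s.pos u1 (mv s hN u1) :=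
      tgt_succ s hN (by omega)
    rw [hchain] at hnext
    obtain ⟨hstX, hstY⟩ := hstab u1 hu1a (by omega)
    have hun1 := tgt_unocc s hN (show u1+1 ≤ L by omega) (mv s hN t)
    have hun2 := tgt_unocc s hN (show u1+1 ≤ L by omega) (md s hN t)
    rw [hstX] at hun1
    rw [hstY] at hun2
    have hd1 : dlt s hN u1 = s.pos (u1+1) (mv s hN u1) - s.pos u1 (mv s hN u1) := rfl
    have hmem1 := dlt_mem s hN (show u1 < L by omega)
    rcases hj with h | h <;> rw [h] at hu1c hnext hmdspec_t <;> omega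
  -- the source of the move at pv is beyond the landing cell
  have hsrc : dlt s hN t * (s.pos (pv s hN t) (mv s hN (pv s hN t)) -
      (s.pos t (mv s hN t) + dlt s hN t)) ≥ 0 := by
    have h1 := hdown (pv s hN t + 1) (by omega) (by omega)
    have hchain : s.pos (pv s hN t + 1 + 1) (mv s hN (pv s hN t + 1))
        = s.pos (pv s hN t) (mv s hN (pv s hN t)) := tgt_succ s hN (by omega)
    rw [hchain] at h1
    exact h1
  have hpvL : pv s hN t < L := by omega
  have hdpv : dlt s hN (pv s hN t) = s.pos (pv s hN t + 1) (mv s hN (pv s hN t))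
      - s.pos (pv s hN t) (mv s hN (pv s hN t)) := rfl
  have hmempv := dlt_mem s hN hpvL
  -- no event of the mid peg in (pv, t)
  have hnoY : ∀ v', pv s hN t < v' → v' < t → ¬ Ev s hN (md s hN t) v' := by
    intro v' h1 h2 hev
    have hv'L : v' < L := by omega
    unfold Ev at hev
    rcases hev with he | ⟨hjv, hmdv⟩
    · exact (pv_max s hN h1 h2).2 he
    · have hmdeq := (md_spec s hN hv'L hjv).2
      have e0 : s.pos v' (md s hN v') = s.pos v' (md s hN t) := by rw [hmdv]
      obtain ⟨hstX, hstY⟩ := hstab v' h1 (by omega)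
      have hD := hdown v' h1 (by omega)
      have hne1 : s.pos v' (mv s hN v') ≠ s.pos v' (mv s hN t) :=
        pos_inj s (by omega) (pv_max s hN h1 h2).1
      have hdv : dlt s hN v' = s.pos (v'+1) (mv s hN v') - s.pos v' (mv s hN v') := rfl
      rcases hj with h | h <;> rw [h] at hD hmdspec_t <;>
        rcases hjv with h2' | h2' <;> rw [h2'] at hmdeq hdv <;> omega
  have hmain : dW s (pv s hN t) < 0 ∧
      (mv s hN (pv s hN t) = md s hN t ∨
        ((dlt s hN (pv s hN t) = 2 ∨ dlt s hN (pv s hN t) = -2) ∧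
         md s hN (pv s hN t) = md s hN t ∧ mv s hN (pv s hN t) = mv s hN t)) := by
    rcases hspec with hmvv | hmvv
    · -- the mover at pv is the jumper X, jumping backward over the mid peg
      have htg : s.pos (pv s hN t + 1) (mv s hN (pv s hN t)) = s.pos t (mv s hN t) := by
        have e : s.pos (pv s hN t + 1) (mv s hN t) = s.pos t (mv s hN t) :=
          (hstab (pv s hN t + 1) (by omega) (by omega)).1
        rw [hmvv]; exact e
      have hkey1 : s.pos (pv s hN t) (mv s hN (pv s hN t))
          = s.pos t (mv s hN t) + dlt s hN t := by
        rcases hj with h | h <;> rw [h] at hsrc ⊢ <;> omega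
      have hkey2 : dlt s hN (pv s hN t) = - dlt s hN t := by omega
      have hjpv : dlt s hN (pv s hN t) = 2 ∨ dlt s hN (pv s hN t) = -2 := by
        rcases hj with h | h <;> rw [h] at hkey2 <;> omega
      have hmdpv_eq := (md_spec s hN hpvL hjpv).2
      have hYpos : s.pos (pv s hN t) (md s hN t) = s.pos t (md s hN t) := by
        have e1 : s.pos (pv s hN t + 1) (md s hN t) = s.pos (pv s hN t) (md s hN t) :=
          mv_fix s hN hpvL (fun he => hmdne (he.trans hmvv))
        rw [← e1]
        exact (hstab (pv s hN t + 1) (by omega) (by omega)).2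
      have hmd_eq : s.pos (pv s hN t) (md s hN (pv s hN t))
          = s.pos (pv s hN t) (md s hN t) := by omega
      have hmdpv : md s hN (pv s hN t) = md s hN t := s.inj _ (by omega) _ _ hmd_eq
      refine ⟨?_, Or.inr ⟨hjpv, hmdpv, hmvv⟩⟩
      rw [dW_eq s hN hpvL, hmvv, hkey2]
      rcases fwd_dir s hN ht hw with ⟨hc, hd⟩ | ⟨hc, hd⟩ <;> rw [hc, hd] <;> norm_num
    · -- the mover at pv is the mid peg Y, moving backward
      have htg : s.pos (pv s hN t + 1) (mv s hN (pv s hN t)) = s.pos t (md s hN t) := by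
        have e : s.pos (pv s hN t + 1) (md s hN t) = s.pos t (md s hN t) :=
          (hstab (pv s hN t + 1) (by omega) (by omega)).2
        rw [hmvv]; exact e
      refine ⟨?_, Or.inl hmvv⟩
      rw [dW_eq s hN hpvL, hmvv, ← hsame]
      rcases fwd_dir s hN ht hw with ⟨hc, hd⟩ | ⟨hc, hd⟩ <;> rw [hc] <;>
        rw [hd] at hsrc hmdspec_t <;> omega
  exact ⟨hvt, hmain.1, hmain.2, hnoY⟩

end PegAux
namespace PegAux
open Finset

variable {N L : ℕ}

def PCross (s : PegSolution N L) (p q : Peg N) (u : ℕ) : Prop :=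
  (s.pos u p - s.pos u q) * (s.pos (u+1) p - s.pos (u+1) q) < 0

/-- previous crossing of the mover-mid pair -/
noncomputable def prcP (s : PegSolution N L) (hN : 0 < N) (t : ℕ) : ℕ :=
  Nat.findGreatest (fun u => PCross s (mv s hN t) (md s hN t) u) (t - 1)

variable (s : PegSolution N L) (hN : 0 < N)

omit hN in
lemma pcross_symm {p q : Peg N} {u : ℕ} : PCross s p q u ↔ PCross s q p u := by
  unfold PCross
  constructor <;> intro h <;>
  · have e : (s.pos u q - s.pos u p) * (s.pos (u+1) q - s.pos (u+1) p)
        = (s.pos u p - s.pos u q) * (s.pos (u+1) p - s.pos (u+1) q) := by ring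
    first
    | (rw [e]; exact h)
    | (rw [← e]; exact h)

include hN

lemma pair_pcross_iff {i j : Fin N} {t u : ℕ}
    (hpair : (mv s hN t = Sum.inl i ∧ md s hN t = Sum.inr j) ∨
      (mv s hN t = Sum.inr j ∧ md s hN t = Sum.inl i)) :
    PCross s (mv s hN t) (md s hN t) u ↔ CrossesAt s i j u := by
  rcases hpair with ⟨h1, h2⟩ | ⟨h1, h2⟩ <;> rw [h1, h2]
  · exact Iff.rfl
  · exact (pcross_symm s).trans Iff.rfl

/-- a non-first-cross forward jump over an opposite-color peg is a re-cross -/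
lemma recross_spec {t : ℕ} (ht : t < L) (hw : dW s t = 2) (hnfc : ¬ IsFirstCross s t)
    (hop : col (mv s hN t) ≠ col (md s hN t)) :
    ∃ i j : Fin N, ((mv s hN t = Sum.inl i ∧ md s hN t = Sum.inr j) ∨
        (mv s hN t = Sum.inr j ∧ md s hN t = Sum.inl i)) ∧
      CrossesAt s i j t ∧ (s.pos t (Sum.inl i) - s.pos t (Sum.inr j) = -1) ∧
      ∃ u, u < t ∧ CrossesAt s i j u := by
  have hj := jump_of_dW2 s hN ht (Or.inl hw)
  have hmds := (md_spec s hN ht hj).2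
  have hmv_move : s.pos (t+1) (mv s hN t) = s.pos t (mv s hN t) + dlt s hN t := by
    have hd : dlt s hN t = s.pos (t+1) (mv s hN t) - s.pos t (mv s hN t) := rfl
    omega
  have hfix : s.pos (t+1) (md s hN t) = s.pos t (md s hN t) :=
    mv_fix s hN ht (md_spec s hN ht hj).1
  have hcr : ∃ i j : Fin N, ((mv s hN t = Sum.inl i ∧ md s hN t = Sum.inr j) ∨
      (mv s hN t = Sum.inr j ∧ md s hN t = Sum.inl i)) ∧ CrossesAt s i j t ∧
      s.pos t (Sum.inl i) - s.pos t (Sum.inr j) = -1 := by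
    rcases fwd_dir s hN ht hw with ⟨hc, hd⟩ | ⟨hc, hd⟩
    · obtain ⟨x, hx⟩ := col_eq_one hc
      have hcm : col (md s hN t) = -1 := by
        rcases col_cases (md s hN t) with h | h
        · exact absurd (hc.trans h.symm) hop
        · exact h
      obtain ⟨y, hy⟩ := col_eq_negone hcm
      rw [hx] at hmv_move
      rw [hy] at hfix
      rw [hx, hy] at hmds
      rw [hd] at hmv_move hmds
      have e1 : s.pos t (Sum.inl x) - s.pos t (Sum.inr y) = -1 := by omega
      have e2 : s.pos (t+1) (Sum.inl x) - s.pos (t+1) (Sum.inr y) = 1 := by omega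
      refine ⟨x, y, Or.inl ⟨hx, hy⟩, ?_, e1⟩
      show (s.pos t (Sum.inl x) - s.pos t (Sum.inr y)) *
        (s.pos (t+1) (Sum.inl x) - s.pos (t+1) (Sum.inr y)) < 0
      rw [e1, e2]
      norm_num
    · obtain ⟨y, hy⟩ := col_eq_negone hc
      have hcm : col (md s hN t) = 1 := by
        rcases col_cases (md s hN t) with h | h
        · exact h
        · exact absurd (hc.trans h.symm) hop
      obtain ⟨x, hx⟩ := col_eq_one hcm
      rw [hy] at hmv_move
      rw [hx] at hfix
      rw [hy, hx] at hmds
      rw [hd] at hmv_move hmds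
      have e1 : s.pos t (Sum.inl x) - s.pos t (Sum.inr y) = -1 := by omega
      have e2 : s.pos (t+1) (Sum.inl x) - s.pos (t+1) (Sum.inr y) = 1 := by omega
      refine ⟨x, y, Or.inr ⟨hy, hx⟩, ?_, e1⟩
      show (s.pos t (Sum.inl x) - s.pos t (Sum.inr y)) *
        (s.pos (t+1) (Sum.inl x) - s.pos (t+1) (Sum.inr y)) < 0
      rw [e1, e2]
      norm_num
  obtain ⟨i, j, hpair, hcross, hdd⟩ := hcr
  unfold IsFirstCross at hnfc
  push_neg at hnfc
  obtain ⟨u, hu, hcu⟩ := hnfc i j hcross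
  exact ⟨i, j, hpair, hcross, hdd, u, hu, hcu⟩

lemma prcP_spec {i j : Fin N} {t : ℕ}
    (hpair : (mv s hN t = Sum.inl i ∧ md s hN t = Sum.inr j) ∨
      (mv s hN t = Sum.inr j ∧ md s hN t = Sum.inl i))
    (hprev : ∃ u, u < t ∧ CrossesAt s i j u) :
    prcP s hN t < t ∧ CrossesAt s i j (prcP s hN t) ∧
    ∀ v, prcP s hN t < v → v < t → ¬ CrossesAt s i j v := by
  obtain ⟨u0, hu0, hcu0⟩ := hprev
  have hw0 : PCross s (mv s hN t) (md s hN t) u0 := (pair_pcross_iff s hN hpair).mpr hcu0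
  refine ⟨?_, ?_, ?_⟩
  · have h := Nat.findGreatest_le
      (P := fun u => PCross s (mv s hN t) (md s hN t) u) (t - 1)
    have : prcP s hN t ≤ t - 1 := h
    omega
  · exact (pair_pcross_iff s hN hpair).mp
      (Nat.findGreatest_spec (P := fun u => PCross s (mv s hN t) (md s hN t) u)
        (by omega : u0 ≤ t - 1) hw0)
  · intro v h1 h2 hcv
    unfold prcP at h1
    exact Nat.findGreatest_is_greatest h1 (by omega : v ≤ t - 1)
      ((pair_pcross_iff s hN hpair).mpr hcv)

lemma prcP_dW {i j : Fin N} {t : ℕ} (ht : t < L)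
    (hpair : (mv s hN t = Sum.inl i ∧ md s hN t = Sum.inr j) ∨
      (mv s hN t = Sum.inr j ∧ md s hN t = Sum.inl i))
    (hdd : s.pos t (Sum.inl i) - s.pos t (Sum.inr j) = -1)
    (hprev : ∃ u, u < t ∧ CrossesAt s i j u) :
    dW s (prcP s hN t) = -2 := by
  obtain ⟨hlt, hcu, hmax⟩ := prcP_spec s hN hpair hprev
  have huL : prcP s hN t < L := by omega
  have hne : s.pos (prcP s hN t + 1) (Sum.inl i) -
      s.pos (prcP s hN t + 1) (Sum.inr j) ≠ 0 :=
    sub_ne_zero_of_ne (pos_inj s (by omega) (by simp))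
  have hddu1 : s.pos (prcP s hN t + 1) (Sum.inl i) -
      s.pos (prcP s hN t + 1) (Sum.inr j) < 0 := by
    by_contra hcon
    push_neg at hcon
    have hpos := dd_keep_pos s (u := prcP s hN t + 1) (t := t) (by omega)
      (by omega) (le_of_lt ht) (fun v hv1 hv2 => hmax v (by omega) hv2)
    omega
  have hprod : (s.pos (prcP s hN t) (Sum.inl i) - s.pos (prcP s hN t) (Sum.inr j)) *
      (s.pos (prcP s hN t + 1) (Sum.inl i) - s.pos (prcP s hN t + 1) (Sum.inr j)) < 0 := hcu
  have hddu : 0 < s.pos (prcP s hN t) (Sum.inl i) - s.pos (prcP s hN t) (Sum.inr j) := by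
    rcases mul_neg_iff.mp hprod with ⟨h1, h2⟩ | ⟨h1, h2⟩
    · exact h1
    · linarith
  obtain ⟨-, -, hdir⟩ := cross_data s hN huL hcu
  rcases hdir with ⟨h1, -⟩ | ⟨-, h2⟩
  · omega
  · exact h2

end PegAux
namespace PegAux
open Finset

variable {N L : ℕ}

/-- the charge assigned to a non-first-cross weight-2 move -/
noncomputable def chg (s : PegSolution N L) (hN : 0 < N) (t : ℕ) : ℕ × ℕ :=
  if col (mv s hN t) = col (md s hN t) then
    (if hex : ∃ u, t < u ∧ u < L ∧ Ev s hN (md s hN t) u then (Nat.find hex, 0)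
     else (pv s hN t, if mv s hN (pv s hN t) = mv s hN t then 2 else 1))
  else (prcP s hN t, 2)

variable (s : PegSolution N L) (hN : 0 < N)
include hN

lemma dW_eq_neg2 {u : ℕ} (hu : u < L) (hju : dlt s hN u = 2 ∨ dlt s hN u = -2)
    (hneg : dW s u < 0) : dW s u = -2 := by
  have h := dW_eq s hN hu
  rcases col_cases (mv s hN u) with hc | hc <;> rcases hju with h2 | h2 <;>
    rw [hc, h2] at h <;> omega

lemma chg_spec {t : ℕ} (ht : t < L) (hw : dW s t = 2) (hnfc : ¬ IsFirstCross s t) :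
    (chg s hN t).1 < L ∧ dW s (chg s hN t).1 < 0 ∧ (chg s hN t).2 < 3 ∧
      ((chg s hN t).2 = 2 → dW s (chg s hN t).1 = -2) := by
  have hj := jump_of_dW2 s hN ht (Or.inl hw)
  unfold chg
  by_cases hcol : col (mv s hN t) = col (md s hN t)
  · rw [if_pos hcol]
    by_cases hex : ∃ u, t < u ∧ u < L ∧ Ev s hN (md s hN t) u
    · rw [dif_pos hex]
      obtain ⟨hu1, hu2, hu3⟩ := Nat.find_spec hex
      have hfst : ∀ v, t < v → v < Nat.find hex → ¬ Ev s hN (md s hN t) v :=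
        fun v h1 h2 hv => Nat.find_min hex h2 ⟨h1, by omega, hv⟩
      have hLE := lemE_first s hN ht hj hcol hw hu1 hu2 hfst hu3
      exact ⟨hu2, hLE.1, by norm_num, fun h => absurd h (by norm_num)⟩
    · rw [dif_neg hex]
      push_neg at hex
      obtain ⟨hvt, hdw, hshape, -⟩ := none_case s hN ht hj hcol hw hex
      refine ⟨by omega, hdw, ?_, ?_⟩
      · by_cases hr : mv s hN (pv s hN t) = mv s hN t <;> simp [hr]
      · intro hrole
        by_cases hr : mv s hN (pv s hN t) = mv s hN t
        · rcases hshape with h | ⟨hjpv, -, -⟩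
          · exact absurd (h.symm.trans hr) (md_spec s hN ht hj).1
          · exact dW_eq_neg2 s hN (by omega) hjpv hdw
        · simp [hr] at hrole
  · rw [if_neg hcol]
    obtain ⟨i, j, hpair, hcross, hdd, hprev⟩ := recross_spec s hN ht hw hnfc hcol
    obtain ⟨hlt, -, -⟩ := prcP_spec s hN hpair hprev
    have hdwp := prcP_dW s hN ht hpair hdd hprev
    refine ⟨?_, ?_, ?_, ?_⟩
    · show prcP s hN t < L
      omega
    · show dW s (prcP s hN t) < 0
      omega
    · show (2:ℕ) < 3
      norm_num
    · intro _
      exact hdwp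

/-- uniqueness of the charged move for role 0 -/
lemma S_unique {t1 t2 : ℕ} (ht1 : t1 < L) (hw1 : dW s t1 = 2)
    (hs1 : col (mv s hN t1) = col (md s hN t1))
    (ht2 : t2 < L) (hw2 : dW s t2 = 2)
    (hs2 : col (mv s hN t2) = col (md s hN t2))
    (hex1 : ∃ u, t1 < u ∧ u < L ∧ Ev s hN (md s hN t1) u)
    (hex2 : ∃ u, t2 < u ∧ u < L ∧ Ev s hN (md s hN t2) u)
    (heq : Nat.find hex1 = Nat.find hex2) : t1 = t2 := by
  have hj1 := jump_of_dW2 s hN ht1 (Or.inl hw1)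
  have hj2 := jump_of_dW2 s hN ht2 (Or.inl hw2)
  obtain ⟨hA1, hB1, hE1⟩ := Nat.find_spec hex1
  obtain ⟨hA2, hB2, hE2⟩ := Nat.find_spec hex2
  rw [← heq] at hA2 hB2 hE2
  have hfst1 : ∀ v, t1 < v → v < Nat.find hex1 → ¬ Ev s hN (md s hN t1) v :=
    fun v h1 h2 hv => Nat.find_min hex1 h2 ⟨h1, by omega, hv⟩
  have hfst2 : ∀ v, t2 < v → v < Nat.find hex1 → ¬ Ev s hN (md s hN t2) v :=
    fun v h1 h2 hv => Nat.find_min hex2 (heq ▸ h2) ⟨h1, by omega, hv⟩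
  by_cases hY : md s hN t1 = md s hN t2
  · rcases Nat.lt_trichotomy t1 t2 with hlt | he | hlt
    · exfalso
      refine hfst1 t2 hlt hA2 ?_
      have h := ev_self s hN hj2
      rw [← hY] at h
      exact h
    · exact he
    · exfalso
      refine hfst2 t1 hlt hA1 ?_
      have h := ev_self s hN hj1
      rw [hY] at h
      exact h
  · exfalso
    have sh1 := lemE_first s hN ht1 hj1 hs1 hw1 hA1 hB1 hfst1 hE1
    have sh2 := lemE_first s hN ht2 hj2 hs2 hw2 hA2 hB1 hfst2 hE2
    have hnoX1 := lemE_noXev s hN ht1 hj1 hA1 (le_of_lt hB1) hfst1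
    have hnoX2 := lemE_noXev s hN ht2 hj2 hA2 (le_of_lt hB1) hfst2
    rcases sh1.2 with m1 | ⟨-, m1, x1⟩ <;> rcases sh2.2 with m2 | ⟨-, m2, x2⟩
    · exact hY (m1.symm.trans m2)
    · -- mv u = md t1 ; md u = md t2 ∧ mv u = mv t2
      have hxy : md s hN t1 = mv s hN t2 := m1.symm.trans x2
      rcases Nat.lt_trichotomy t1 t2 with hlt | he | hlt
      · exact hfst1 t2 hlt hA2 (Or.inl hxy.symm)
      · subst he
        exact (md_spec s hN ht1 hj1).1 hxy
      · refine hnoX2 t1 hlt hA1 ?_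
        have h := ev_self s hN hj1
        rw [hxy] at h
        exact h
    · -- md u = md t1 ∧ mv u = mv t1 ; mv u = md t2
      have hxy : md s hN t2 = mv s hN t1 := m2.symm.trans x1
      rcases Nat.lt_trichotomy t1 t2 with hlt | he | hlt
      · refine hnoX1 t2 hlt hA2 ?_
        have h := ev_self s hN hj2
        rw [hxy] at h
        exact h
      · subst he
        exact (md_spec s hN ht1 hj1).1 hxy
      · exact hfst2 t1 hlt hA1 (Or.inl hxy.symm)
    · exact hY (m1.symm.trans m2)

/-- uniqueness of the charged move for the `none` cases -/
lemma none_unique {t1 t2 : ℕ} (ht1 : t1 < L) (hw1 : dW s t1 = 2)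
    (hs1 : col (mv s hN t1) = col (md s hN t1))
    (hnone1 : ∀ u, t1 < u → u < L → ¬ Ev s hN (md s hN t1) u)
    (ht2 : t2 < L) (hw2 : dW s t2 = 2)
    (hs2 : col (mv s hN t2) = col (md s hN t2))
    (hnone2 : ∀ u, t2 < u → u < L → ¬ Ev s hN (md s hN t2) u)
    (heq : pv s hN t1 = pv s hN t2)
    (hmd : md s hN t1 = md s hN t2) : t1 = t2 := by
  have hj1 := jump_of_dW2 s hN ht1 (Or.inl hw1)
  have hj2 := jump_of_dW2 s hN ht2 (Or.inl hw2)
  obtain ⟨hvt1, -, -, hnoY1⟩ := none_case s hN ht1 hj1 hs1 hw1 hnone1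
  obtain ⟨hvt2, -, -, hnoY2⟩ := none_case s hN ht2 hj2 hs2 hw2 hnone2
  rcases Nat.lt_trichotomy t1 t2 with hlt | he | hlt
  · exfalso
    refine hnoY2 t1 (by omega) hlt ?_
    have h := ev_self s hN hj1
    rw [hmd] at h
    exact h
  · exact he
  · exfalso
    refine hnoY1 t2 (by omega) hlt ?_
    have h := ev_self s hN hj2
    rw [← hmd] at h
    exact h

/-- a recross charge and a `none` charge never coincide (role 2) -/
lemma R_not_none {t1 t2 : ℕ} (ht1 : t1 < L) (hw1 : dW s t1 = 2)
    (hnfc1 : ¬ IsFirstCross s t1)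
    (hop1 : ¬ col (mv s hN t1) = col (md s hN t1))
    (ht2 : t2 < L) (hw2 : dW s t2 = 2)
    (hcol2 : col (mv s hN t2) = col (md s hN t2))
    (hnone2 : ∀ u, t2 < u → u < L → ¬ Ev s hN (md s hN t2) u)
    (heq : prcP s hN t1 = pv s hN t2)
    (hrole : mv s hN (pv s hN t2) = mv s hN t2) : False := by
  have hj2 := jump_of_dW2 s hN ht2 (Or.inl hw2)
  obtain ⟨i, j, hp1, hc1, hdd1, hprev1⟩ := recross_spec s hN ht1 hw1 hnfc1 hop1
  obtain ⟨hlt1, hcu1, -⟩ := prcP_spec s hN hp1 hprev1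
  obtain ⟨hvt2, -, hshape2, -⟩ := none_case s hN ht2 hj2 hcol2 hw2 hnone2
  have hsh : md s hN (pv s hN t2) = md s hN t2 ∧ mv s hN (pv s hN t2) = mv s hN t2 := by
    rcases hshape2 with h | ⟨-, h1, h2⟩
    · exact absurd (h.symm.trans hrole) (md_spec s hN ht2 hj2).1
    · exact ⟨h1, h2⟩
  have huL : prcP s hN t1 < L := by omega
  obtain ⟨-, hmm, -⟩ := cross_data s hN huL hcu1
  rw [heq] at hmm
  rcases hmm with ⟨e1, e2⟩ | ⟨e1, e2⟩
  · have c1 : col (mv s hN (pv s hN t2)) = 1 := by rw [e1]; rfl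
    have c2 : col (md s hN (pv s hN t2)) = -1 := by rw [e2]; rfl
    rw [hsh.2] at c1
    rw [hsh.1] at c2
    rw [hcol2] at c1
    omega
  · have c1 : col (mv s hN (pv s hN t2)) = -1 := by rw [e1]; rfl
    have c2 : col (md s hN (pv s hN t2)) = 1 := by rw [e2]; rfl
    rw [hsh.2] at c1
    rw [hsh.1] at c2
    rw [hcol2] at c1
    omega

/-- uniqueness of the recross charge -/
lemma R_unique {t1 t2 : ℕ} (ht1 : t1 < L) (hw1 : dW s t1 = 2)
    (hnfc1 : ¬ IsFirstCross s t1)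
    (hop1 : ¬ col (mv s hN t1) = col (md s hN t1))
    (ht2 : t2 < L) (hw2 : dW s t2 = 2)
    (hnfc2 : ¬ IsFirstCross s t2)
    (hop2 : ¬ col (mv s hN t2) = col (md s hN t2))
    (heq : prcP s hN t1 = prcP s hN t2) : t1 = t2 := by
  obtain ⟨i1, j1, hp1, hc1, hdd1, hprev1⟩ := recross_spec s hN ht1 hw1 hnfc1 hop1
  obtain ⟨i2, j2, hp2, hc2, hdd2, hprev2⟩ := recross_spec s hN ht2 hw2 hnfc2 hop2
  obtain ⟨hlt1, hcu1, hmax1⟩ := prcP_spec s hN hp1 hprev1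
  obtain ⟨hlt2, hcu2, hmax2⟩ := prcP_spec s hN hp2 hprev2
  rw [heq] at hcu1 hmax1 hlt1
  have huL : prcP s hN t2 < L := by omega
  obtain ⟨heqi, heqj⟩ := pair_unique s huL hcu1 hcu2
  rcases Nat.lt_trichotomy t1 t2 with hlt | he | hlt
  · exfalso
    refine hmax2 t1 (by omega) hlt ?_
    rw [← heqi, ← heqj]
    exact hc1
  · exact he
  · exfalso
    refine hmax1 t2 (by omega) hlt ?_
    rw [heqi, heqj]
    exact hc2

/-- the charge map is injective on non-first-cross weight-2 moves -/
lemma chg_inj {t1 t2 : ℕ} (ht1 : t1 < L) (hw1 : dW s t1 = 2) (hnfc1 : ¬ IsFirstCross s t1)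
    (ht2 : t2 < L) (hw2 : dW s t2 = 2) (hnfc2 : ¬ IsFirstCross s t2)
    (heq : chg s hN t1 = chg s hN t2) : t1 = t2 := by
  have hj1 := jump_of_dW2 s hN ht1 (Or.inl hw1)
  have hj2 := jump_of_dW2 s hN ht2 (Or.inl hw2)
  unfold chg at heq
  by_cases hcol1 : col (mv s hN t1) = col (md s hN t1)
  · rw [if_pos hcol1] at heq
    by_cases hex1 : ∃ u, t1 < u ∧ u < L ∧ Ev s hN (md s hN t1) u
    · rw [dif_pos hex1] at heq
      by_cases hcol2 : col (mv s hN t2) = col (md s hN t2)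
      · rw [if_pos hcol2] at heq
        by_cases hex2 : ∃ u, t2 < u ∧ u < L ∧ Ev s hN (md s hN t2) u
        · rw [dif_pos hex2] at heq
          exact S_unique s hN ht1 hw1 hcol1 ht2 hw2 hcol2 hex1 hex2
            (congrArg Prod.fst heq)
        · rw [dif_neg hex2] at heq
          exfalso
          have h2 := congrArg Prod.snd heq
          simp only at h2
          split_ifs at h2 <;> omega
      · rw [if_neg hcol2] at heq
        exfalso
        have h2 := congrArg Prod.snd heq
        simp only at h2
        omega
    · rw [dif_neg hex1] at heq
      push_neg at hex1
      by_cases hcol2 : col (mv s hN t2) = col (md s hN t2)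
      · rw [if_pos hcol2] at heq
        by_cases hex2 : ∃ u, t2 < u ∧ u < L ∧ Ev s hN (md s hN t2) u
        · rw [dif_pos hex2] at heq
          exfalso
          have h2 := congrArg Prod.snd heq
          simp only at h2
          split_ifs at h2 <;> omega
        · rw [dif_neg hex2] at heq
          push_neg at hex2
          have h1 := congrArg Prod.fst heq
          have h2 := congrArg Prod.snd heq
          simp only at h1 h2
          obtain ⟨-, -, hshape1, -⟩ := none_case s hN ht1 hj1 hcol1 hw1 hex1
          obtain ⟨-, -, hshape2, -⟩ := none_case s hN ht2 hj2 hcol2 hw2 hex2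
          by_cases hr1 : mv s hN (pv s hN t1) = mv s hN t1 <;>
            by_cases hr2 : mv s hN (pv s hN t2) = mv s hN t2
          · -- both role 2 : Nx-Nx
            have hmd1 : md s hN (pv s hN t1) = md s hN t1 := by
              rcases hshape1 with h | ⟨-, hm, -⟩
              · exact absurd (h.symm.trans hr1) (md_spec s hN ht1 hj1).1
              · exact hm
            have hmd2 : md s hN (pv s hN t2) = md s hN t2 := by
              rcases hshape2 with h | ⟨-, hm, -⟩
              · exact absurd (h.symm.trans hr2) (md_spec s hN ht2 hj2).1
              · exact hm
            refine none_unique s hN ht1 hw1 hcol1 hex1 ht2 hw2 hcol2 hex2 h1 ?_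
            rw [← hmd1, h1, hmd2]
          · exfalso
            rw [if_pos hr1, if_neg hr2] at h2
            omega
          · exfalso
            rw [if_neg hr1, if_pos hr2] at h2
            omega
          · -- both role 1 : Ny-Ny
            have hmd1 : mv s hN (pv s hN t1) = md s hN t1 := by
              rcases hshape1 with h | ⟨-, -, hm⟩
              · exact h
              · exact absurd hm hr1
            have hmd2 : mv s hN (pv s hN t2) = md s hN t2 := by
              rcases hshape2 with h | ⟨-, -, hm⟩
              · exact h
              · exact absurd hm hr2
            refine none_unique s hN ht1 hw1 hcol1 hex1 ht2 hw2 hcol2 hex2 h1 ?_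
            rw [← hmd1, h1, hmd2]
      · rw [if_neg hcol2] at heq
        exfalso
        have h1 := congrArg Prod.fst heq
        have h2 := congrArg Prod.snd heq
        simp only at h1 h2
        -- role on left must be 2
        by_cases hr1 : mv s hN (pv s hN t1) = mv s hN t1
        · exact R_not_none s hN ht2 hw2 hnfc2 hcol2 ht1 hw1 hcol1 hex1 h1.symm hr1
        · rw [if_neg hr1] at h2
          omega
  · rw [if_neg hcol1] at heq
    by_cases hcol2 : col (mv s hN t2) = col (md s hN t2)
    · rw [if_pos hcol2] at heq
      by_cases hex2 : ∃ u, t2 < u ∧ u < L ∧ Ev s hN (md s hN t2) u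
      · rw [dif_pos hex2] at heq
        exfalso
        have h2 := congrArg Prod.snd heq
        simp only at h2
        omega
      · rw [dif_neg hex2] at heq
        push_neg at hex2
        exfalso
        have h1 := congrArg Prod.fst heq
        have h2 := congrArg Prod.snd heq
        simp only at h1 h2
        by_cases hr2 : mv s hN (pv s hN t2) = mv s hN t2
        · exact R_not_none s hN ht1 hw1 hnfc1 hcol1 ht2 hw2 hcol2 hex2 h1 hr2
        · rw [if_neg hr2] at h2
          omega
    · rw [if_neg hcol2] at heq
      exact R_unique s hN ht1 hw1 hnfc1 hcol1 ht2 hw2 hnfc2 hcol2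
        (congrArg Prod.fst heq)

end PegAux

/-- In any solution to the peg puzzle, the number of moves other than first
crosses is at least `2N`; since there are `N²` first crosses, the total
number of moves is at least `N² + 2N`. -/
theorem steps_at_least (N L : ℕ) (s : PegSolution N L) :
    2 * N ≤ ((Finset.range L).filter (fun t => ¬ IsFirstCross s t)).card ∧
    N ^ 2 + 2 * N ≤ L := by
  classical
  have hFG : ((Finset.range L).filter (fun t => IsFirstCross s t)).card
      + ((Finset.range L).filter (fun t => ¬ IsFirstCross s t)).card = L := by
    rw [Finset.card_filter_add_card_filter_not]
    exact Finset.card_range L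
  have hFcard := PegAux.card_FC s
  rcases Nat.eq_zero_or_pos N with rfl | hN
  · refine ⟨by omega, by simpa using Nat.zero_le L⟩
  set G := (Finset.range L).filter (fun t => ¬ IsFirstCross s t) with hG
  set F := (Finset.range L).filter (fun t => IsFirstCross s t) with hF
  -- sum of weight changes over non-first-cross moves is 2N
  have hsplit : ∑ t ∈ F, PegAux.dW s t + ∑ t ∈ G, PegAux.dW s t
      = 2 * N * (N + 1) := by
    rw [hF, hG, Finset.sum_filter_add_sum_filter_not]
    exact PegAux.sum_dW s
  have hFsum : ∑ t ∈ F, PegAux.dW s t = (F.card : ℤ) * 2 := by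
    have h2 : ∀ t ∈ F, PegAux.dW s t = 2 := by
      intro t htm
      rw [hF] at htm
      simp only [Finset.mem_filter, Finset.mem_range] at htm
      exact PegAux.dW_FC s htm.1 htm.2
    calc ∑ t ∈ F, PegAux.dW s t = ∑ _t ∈ F, (2:ℤ) := Finset.sum_congr rfl h2
      _ = (F.card : ℤ) * 2 := by rw [Finset.sum_const, nsmul_eq_mul]
  have hGsum : ∑ t ∈ G, PegAux.dW s t = 2 * N := by
    have hB : ∑ t ∈ G, PegAux.dW s t = 2*(N:ℤ)*(N+1) - (F.card : ℤ) * 2 := by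
      linarith
    rw [hB, hFcard]
    push_cast
    ring
  -- membership facts for G
  have hGmem : ∀ t ∈ G, t < L ∧ ¬ IsFirstCross s t := by
    intro t htm
    rw [hG] at htm
    simp only [Finset.mem_filter, Finset.mem_range] at htm
    exact htm
  -- split G by weight change value
  set A := G.filter (fun t => PegAux.dW s t = 2) with hA
  set C := G.filter (fun t => PegAux.dW s t = 1) with hC
  set B1 := G.filter (fun t => PegAux.dW s t = -1) with hB1
  set G1 := G.filter (fun t => ¬ PegAux.dW s t = 2) with hG1
  set G2 := G1.filter (fun t => ¬ PegAux.dW s t = 1) with hG2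
  set B2 := G2.filter (fun t => ¬ PegAux.dW s t = -1) with hB2
  have eC : G1.filter (fun t => PegAux.dW s t = 1) = C := by
    rw [hG1, hC, Finset.filter_filter]
    apply Finset.filter_congr
    intro t _
    constructor <;> intro h
    · omega
    · omega
  have eB1 : G2.filter (fun t => PegAux.dW s t = -1) = B1 := by
    rw [hG2, hG1, hB1, Finset.filter_filter, Finset.filter_filter]
    apply Finset.filter_congr
    intro t _
    constructor <;> intro h
    · omega
    · omega
  have hB2w : ∀ t ∈ B2, PegAux.dW s t = -2 := by
    intro t htm
    rw [hB2, hG2, hG1] at htm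
    simp only [Finset.mem_filter, Finset.mem_range] at htm
    obtain ⟨⟨⟨htG, h2⟩, h1⟩, hm1⟩ := htm
    have htL : t < L := (hGmem t htG).1
    rcases PegAux.dW_mem s hN htL with h | h | h | h <;> omega
  -- counting identities
  have d1 := Finset.card_filter_add_card_filter_not
    (s := G) (p := fun t => PegAux.dW s t = 2)
  have d2 := Finset.card_filter_add_card_filter_not
    (s := G1) (p := fun t => PegAux.dW s t = 1)
  have d3 := Finset.card_filter_add_card_filter_not
    (s := G2) (p := fun t => PegAux.dW s t = -1)
  rw [← hA, ← hG1] at d1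
  rw [eC, ← hG2] at d2
  rw [eB1, ← hB2] at d3
  have ecard : G.card = A.card + (C.card + (B1.card + B2.card)) := by omega
  have s1 := Finset.sum_filter_add_sum_filter_not G (fun t => PegAux.dW s t = 2)
    (PegAux.dW s)
  have s2 := Finset.sum_filter_add_sum_filter_not G1 (fun t => PegAux.dW s t = 1)
    (PegAux.dW s)
  have s3 := Finset.sum_filter_add_sum_filter_not G2 (fun t => PegAux.dW s t = -1)
    (PegAux.dW s)
  rw [← hA, ← hG1] at s1
  rw [eC, ← hG2] at s2
  rw [eB1, ← hB2] at s3
  have sA : ∑ t ∈ A, PegAux.dW s t = (A.card : ℤ) * 2 := by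
    calc ∑ t ∈ A, PegAux.dW s t = ∑ _t ∈ A, (2:ℤ) := by
          apply Finset.sum_congr rfl
          intro t htm
          rw [hA] at htm
          exact (Finset.mem_filter.mp htm).2
      _ = (A.card : ℤ) * 2 := by rw [Finset.sum_const, nsmul_eq_mul]
  have sC : ∑ t ∈ C, PegAux.dW s t = (C.card : ℤ) := by
    calc ∑ t ∈ C, PegAux.dW s t = ∑ _t ∈ C, (1:ℤ) := by
          apply Finset.sum_congr rfl
          intro t htm
          rw [hC] at htm
          exact (Finset.mem_filter.mp htm).2
      _ = (C.card : ℤ) := by rw [Finset.sum_const, nsmul_eq_mul, mul_one]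
  have sB1 : ∑ t ∈ B1, PegAux.dW s t = -(B1.card : ℤ) := by
    calc ∑ t ∈ B1, PegAux.dW s t = ∑ _t ∈ B1, (-1:ℤ) := by
          apply Finset.sum_congr rfl
          intro t htm
          rw [hB1] at htm
          exact (Finset.mem_filter.mp htm).2
      _ = -(B1.card : ℤ) := by rw [Finset.sum_const, nsmul_eq_mul, mul_neg_one]
  have sB2 : ∑ t ∈ B2, PegAux.dW s t = (B2.card : ℤ) * (-2) := by
    calc ∑ t ∈ B2, PegAux.dW s t = ∑ _t ∈ B2, (-2:ℤ) :=
          Finset.sum_congr rfl (fun t htm => hB2w t htm)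
      _ = (B2.card : ℤ) * (-2) := by rw [Finset.sum_const, nsmul_eq_mul]
  -- the injection: A.card ≤ 3 B2.card + 2 B1.card
  have hmaps : ∀ t ∈ A, PegAux.chg s hN t ∈
      (B2 ×ˢ Finset.range 3) ∪ (B1 ×ˢ Finset.range 2) := by
    intro t htm
    rw [hA] at htm
    obtain ⟨htG, hw⟩ := Finset.mem_filter.mp htm
    obtain ⟨htL, hnfc⟩ := hGmem t htG
    obtain ⟨hu1, hu2, hu3, hu4⟩ := PegAux.chg_spec s hN htL hw hnfc
    have hnfcU : ¬ IsFirstCross s (PegAux.chg s hN t).1 := by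
      intro hfc
      have := PegAux.dW_FC s hu1 hfc
      omega
    have hUG : (PegAux.chg s hN t).1 ∈ G := by
      rw [hG]
      simp only [Finset.mem_filter, Finset.mem_range]
      exact ⟨hu1, hnfcU⟩
    rcases PegAux.dW_mem s hN hu1 with h | h | h | h
    · exact absurd hu2 (by omega)
    · -- dW = -1: role < 2
      apply Finset.mem_union_right
      simp only [Finset.mem_product, Finset.mem_range]
      refine ⟨?_, ?_⟩
      · rw [hB1]
        simp only [Finset.mem_filter]
        exact ⟨hUG, h⟩
      · have hne2 : (PegAux.chg s hN t).2 ≠ 2 := fun he => by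
          have := hu4 he
          omega
        omega
    · exact absurd hu2 (by omega)
    · -- dW = -2
      apply Finset.mem_union_left
      simp only [Finset.mem_product, Finset.mem_range]
      refine ⟨?_, hu3⟩
      rw [hB2, hG2, hG1]
      simp only [Finset.mem_filter]
      exact ⟨⟨⟨hUG, by omega⟩, by omega⟩, by omega⟩
  have hinjA : Set.InjOn (PegAux.chg s hN) ↑A := by
    intro t1 h1 t2 h2 he
    have h1' := Finset.mem_coe.mp h1
    have h2' := Finset.mem_coe.mp h2
    rw [hA] at h1' h2'
    obtain ⟨hGa, hw1⟩ := Finset.mem_filter.mp h1'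
    obtain ⟨hGb, hw2⟩ := Finset.mem_filter.mp h2'
    obtain ⟨hL1, hn1⟩ := hGmem _ hGa
    obtain ⟨hL2, hn2⟩ := hGmem _ hGb
    exact PegAux.chg_inj s hN hL1 hw1 hn1 hL2 hw2 hn2 he
  have hAcard : A.card ≤ B2.card * 3 + B1.card * 2 := by
    calc A.card ≤ ((B2 ×ˢ Finset.range 3) ∪ (B1 ×ˢ Finset.range 2)).card :=
          Finset.card_le_card_of_injOn _ hmaps hinjA
      _ ≤ (B2 ×ˢ Finset.range 3).card + (B1 ×ˢ Finset.range 2).card :=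
          Finset.card_union_le _ _
      _ = B2.card * 3 + B1.card * 2 := by
          rw [Finset.card_product, Finset.card_product, Finset.card_range,
            Finset.card_range]
  -- conclude
  have hGcard : 2 * N ≤ G.card := by
    have h2 : (A.card : ℤ) ≤ (B2.card : ℤ) * 3 + (B1.card : ℤ) * 2 := by
      exact_mod_cast hAcard
    have h3 : (G.card : ℤ) = (A.card : ℤ) + ((C.card : ℤ) + ((B1.card : ℤ) + (B2.card : ℤ))) := by
      exact_mod_cast congrArg (Nat.cast : ℕ → ℤ) ecard
    have h4 : (2 * N : ℤ) ≤ (G.card : ℤ) := by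
      linarith [s1, s2, s3, sA, sC, sB1, sB2, hGsum]
    exact_mod_cast h4
  constructor
  · exact hGcard
  · have hpow : N ^ 2 = N * N := by ring
    omega
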